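/- arXiv:2005.12786 — 2 statements merged into one kernel-verified Lean document; each statement's English description precedes it below -/
import Mathlib

section
/- Let H be a complex Hilbert space, let T be a bounded operator on H with ‖h‖ ≤ ‖T h‖ for all h ∈ H, and let M be a closed subspace of H that is nearly T⁻¹-invariant with defect p, with defect space F orthogonal to M. Let R be the unique bounded operator on H with T ∘ R = P_{M ∩ T(H)}, let Q = P_{M ⊖ (M ∩ T(H))}, and let S′ = P_F. Then for every h ∈ M and every m ∈ ℕ: Σ_{k=0}^{m} ‖Q R^k h‖² + Σ_{k=1}^{m} ‖S′ R^k h‖² ≤ ‖h‖². Consequently, the infinite series Σ_{k=0}^{∞} ‖Q R^k h‖² + Σ_{k=1}^{∞} ‖S′ R^k h‖² converges and is at most ‖h‖². -/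
/-!
Write `gₖ = Rᵏ h`. Near invariance keeps every `gₖ` in `M ⊔ F`, so `gₖ = mₖ + fₖ` with
`mₖ ∈ M` and `fₖ = S' gₖ ∈ F`. Since `T` is injective and `P` vanishes on `F`, `R` kills `F`, and
so does `Q`; hence `Q gₖ = Q mₖ` and `gₖ₊₁ = R mₖ`. Splitting `mₖ` along `M ∩ T(H)` and its
complement in `M`, and using `‖R mₖ‖ ≤ ‖T R mₖ‖ = ‖P mₖ‖`,
`‖Q gₖ‖² + ‖S' gₖ₊₁‖² + ‖mₖ₊₁‖² = ‖Q mₖ‖² + ‖R mₖ‖² ≤ ‖Q mₖ‖² + ‖P mₖ‖² = ‖mₖ‖²`,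
and the estimate telescopes from `m₀ = h`.
-/

/-- `P` is the orthogonal projection of the ambient space onto the subspace `L`. -/
def IsOrthoProjOn {H : Type*} [NormedAddCommGroup H] [InnerProductSpace ℂ H]
    (L : Submodule ℂ H) (P : H →L[ℂ] H) : Prop :=
  (∀ x, P x ∈ L) ∧ ∀ x, x - P x ∈ Lᗮ

theorem sum_range_add_le_of_add_le {a c : ℕ → ℝ} (h : ∀ k, a k + c (k + 1) ≤ c k) (n : ℕ) :
    ∑ k ∈ Finset.range n, a k + c n ≤ c 0 := by
  induction n with
  | zero => simp
  | succ n ih =>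
    rw [Finset.sum_range_succ]
    linarith [h n]

theorem summable_and_tsum_add_le {f g : ℕ → ℝ} {c : ℝ} (hf : 0 ≤ f) (hg : 0 ≤ g)
    (h : ∀ n, ∑ k ∈ Finset.range n, (f k + g k) ≤ c) :
    Summable f ∧ Summable g ∧ ∑' k, f k + ∑' k, g k ≤ c := by
  have hfg : Summable (f + g) := summable_of_sum_range_le (fun k => add_nonneg (hf k) (hg k)) h
  have hsf : Summable f := hfg.of_nonneg_of_le hf fun k => le_add_of_nonneg_right (hg k)
  have hsg : Summable g := hfg.of_nonneg_of_le hg fun k => le_add_of_nonneg_left (hf k)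
  refine ⟨hsf, hsg, ?_⟩
  rw [← hsf.tsum_add hsg]
  exact hfg.tsum_le_of_sum_range_le h

namespace IsOrthoProjOn

variable {H : Type*} [NormedAddCommGroup H] [InnerProductSpace ℂ H]
  {L : Submodule ℂ H} {P : H →L[ℂ] H}

theorem apply_eq_self (hP : IsOrthoProjOn L P) {x : H} (hx : x ∈ L) : P x = x := by
  have hmem : x - P x ∈ L ⊓ Lᗮ := ⟨L.sub_mem hx (hP.1 x), hP.2 x⟩
  rw [L.inf_orthogonal_eq_bot, Submodule.mem_bot, sub_eq_zero] at hmem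
  exact hmem.symm

theorem apply_eq_zero (hP : IsOrthoProjOn L P) {x : H} (hx : x ∈ Lᗮ) : P x = 0 := by
  have hmem : P x ∈ L ⊓ Lᗮ := ⟨hP.1 x, by simpa using Lᗮ.sub_mem hx (hP.2 x)⟩
  rwa [L.inf_orthogonal_eq_bot, Submodule.mem_bot] at hmem

theorem norm_sq_eq_add (hP : IsOrthoProjOn L P) (x : H) :
    ‖x‖ ^ 2 = ‖P x‖ ^ 2 + ‖x - P x‖ ^ 2 := by
  have h := norm_add_sq_eq_norm_sq_add_norm_sq_of_inner_eq_zero (P x) (x - P x)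
    (Submodule.inner_right_of_mem_orthogonal (hP.1 x) (hP.2 x))
  rwa [add_sub_cancel, ← pow_two, ← pow_two, ← pow_two] at h

theorem norm_sq_eq_add_of_le {M : Submodule ℂ H} {Q : H →L[ℂ] H} (hP : IsOrthoProjOn L P)
    (hQ : IsOrthoProjOn (M ⊓ Lᗮ) Q) (hLM : L ≤ M) {x : H} (hx : x ∈ M) :
    ‖x‖ ^ 2 = ‖P x‖ ^ 2 + ‖Q x‖ ^ 2 := by
  have hQP : Q (P x) = 0 := hQ.apply_eq_zero <|
    Submodule.orthogonal_le inf_le_right (L.le_orthogonal_orthogonal (hP.1 x))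
  have hQx : Q x = x - P x := by
    rw [← hQ.apply_eq_self ⟨M.sub_mem hx (hLM (hP.1 x)), hP.2 x⟩, map_sub, hQP, sub_zero]
  rw [hQx, hP.norm_sq_eq_add]

theorem sub_apply_mem_of_mem_sup {M : Submodule ℂ H} (hP : IsOrthoProjOn L P) (hLM : L ≤ Mᗮ)
    {x : H} (hx : x ∈ M ⊔ L) : x - P x ∈ M := by
  obtain ⟨m, hm, f, hf, rfl⟩ := Submodule.mem_sup.mp hx
  have hPm : P m = 0 := hP.apply_eq_zero <|
    Submodule.orthogonal_le hLM (M.le_orthogonal_orthogonal hm)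
  rwa [map_add, hPm, hP.apply_eq_self hf, zero_add, add_sub_cancel_right]

end IsOrthoProjOn

section BoundedBelow

variable {H : Type*} [NormedAddCommGroup H] [InnerProductSpace ℂ H]
  {T R P : H →L[ℂ] H} {L : Submodule ℂ H}

theorem ContinuousLinearMap.norm_le_norm_of_comp_eq (hT : ∀ h : H, ‖h‖ ≤ ‖T h‖)
    (hR : T.comp R = P) (x : H) : ‖R x‖ ≤ ‖P x‖ := by
  simpa [← hR] using hT (R x)

theorem ContinuousLinearMap.apply_eq_zero_of_comp_eq (hT : ∀ h : H, ‖h‖ ≤ ‖T h‖)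
    (hR : T.comp R = P) (hP : IsOrthoProjOn L P) {x : H} (hx : x ∈ Lᗮ) : R x = 0 := by
  simpa [hP.apply_eq_zero hx] using ContinuousLinearMap.norm_le_norm_of_comp_eq hT hR x

end BoundedBelow

section NearlyInvariant

variable {H : Type*} [NormedAddCommGroup H] [InnerProductSpace ℂ H]
  {T R P Q S' : H →L[ℂ] H} {L M F : Submodule ℂ H}

theorem apply_mem_sup_of_nearly_invariant (hT : ∀ h : H, ‖h‖ ≤ ‖T h‖) (hFM : F ≤ Mᗮ)
    (hnear : ∀ f : H, T f ∈ M → f ∈ M ⊔ F) (hLM : L ≤ M) (hP : IsOrthoProjOn L P)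
    (hR : T.comp R = P) {g : H} (hg : g ∈ M ⊔ F) : R g ∈ M ⊔ F := by
  obtain ⟨m, -, f, hf, rfl⟩ := Submodule.mem_sup.mp hg
  have hRf : R f = 0 := ContinuousLinearMap.apply_eq_zero_of_comp_eq hT hR hP <|
    Submodule.orthogonal_le hLM (hFM hf)
  rw [map_add, hRf, add_zero]
  apply hnear
  rw [← ContinuousLinearMap.comp_apply, hR]
  exact hLM (hP.1 m)

theorem norm_sq_add_norm_sq_add_norm_sq_le (hT : ∀ h : H, ‖h‖ ≤ ‖T h‖) (hFM : F ≤ Mᗮ)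
    (hLM : L ≤ M) (hP : IsOrthoProjOn L P) (hR : T.comp R = P)
    (hQ : IsOrthoProjOn (M ⊓ Lᗮ) Q) (hS' : IsOrthoProjOn F S') {g : H} (hg : g ∈ M ⊔ F) :
    ‖Q g‖ ^ 2 + ‖S' (R g)‖ ^ 2 + ‖R g - S' (R g)‖ ^ 2 ≤ ‖g - S' g‖ ^ 2 := by
  set m := g - S' g
  have hm : m ∈ M := hS'.sub_apply_mem_of_mem_sup hFM hg
  have hf : S' g ∈ Mᗮ := hFM (hS'.1 g)
  have hRg : R g = R m := by
    rw [map_sub, ContinuousLinearMap.apply_eq_zero_of_comp_eq hT hR hP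
      (Submodule.orthogonal_le hLM hf), sub_zero]
  have hQg : Q g = Q m := by
    rw [map_sub, hQ.apply_eq_zero (Submodule.orthogonal_le inf_le_left hf), sub_zero]
  have hRm : ‖R m‖ ^ 2 ≤ ‖P m‖ ^ 2 := by
    gcongr
    exact ContinuousLinearMap.norm_le_norm_of_comp_eq hT hR m
  have hsplit := hS'.norm_sq_eq_add (R m)
  rw [hRg, hQg, hP.norm_sq_eq_add_of_le hQ hLM hm]
  linarith

end NearlyInvariant

theorem stmt_10_general {H : Type*} [NormedAddCommGroup H] [InnerProductSpace ℂ H]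
    (T : H →L[ℂ] H) (hT : ∀ h : H, ‖h‖ ≤ ‖T h‖)
    (M F : Submodule ℂ H)
    (hFM : F ≤ Mᗮ)
    (hnear : ∀ f : H, T f ∈ M → f ∈ M ⊔ F)
    (P : H →L[ℂ] H) (hP : IsOrthoProjOn (M ⊓ LinearMap.range (T : H →ₗ[ℂ] H)) P)
    (R : H →L[ℂ] H) (hR : T.comp R = P)
    (Q : H →L[ℂ] H) (hQ : IsOrthoProjOn (M ⊓ (M ⊓ LinearMap.range (T : H →ₗ[ℂ] H))ᗮ) Q)
    (S' : H →L[ℂ] H) (hS' : IsOrthoProjOn F S') :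
    ∀ h ∈ M,
      (∀ m : ℕ,
        (∑ k ∈ Finset.range (m + 1), ‖Q ((R ^ k) h)‖ ^ 2)
          + ∑ k ∈ Finset.Icc 1 m, ‖S' ((R ^ k) h)‖ ^ 2 ≤ ‖h‖ ^ 2) ∧
      Summable (fun k : ℕ => ‖Q ((R ^ k) h)‖ ^ 2) ∧
      Summable (fun k : ℕ => ‖S' ((R ^ (k + 1)) h)‖ ^ 2) ∧
      (∑' k : ℕ, ‖Q ((R ^ k) h)‖ ^ 2) + (∑' k : ℕ, ‖S' ((R ^ (k + 1)) h)‖ ^ 2)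
        ≤ ‖h‖ ^ 2 := by
  intro h hM
  have hsucc (k : ℕ) : (R ^ (k + 1)) h = R ((R ^ k) h) := by
    rw [pow_succ', mul_apply_eq_comp]
  have hmem : ∀ k, (R ^ k) h ∈ M ⊔ F := by
    intro k
    induction k with
    | zero => exact Submodule.mem_sup_left hM
    | succ k ih => exact hsucc k ▸ apply_mem_sup_of_nearly_invariant hT hFM hnear inf_le_left hP hR ih
  have hS'h : S' h = 0 :=
    hS'.apply_eq_zero (Submodule.orthogonal_le hFM (M.le_orthogonal_orthogonal hM))
  have hbound (n : ℕ) : ∑ k ∈ Finset.range n,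
      (‖Q ((R ^ k) h)‖ ^ 2 + ‖S' ((R ^ (k + 1)) h)‖ ^ 2) ≤ ‖h‖ ^ 2 := by
    have htel := sum_range_add_le_of_add_le
      (a := fun k => ‖Q ((R ^ k) h)‖ ^ 2 + ‖S' ((R ^ (k + 1)) h)‖ ^ 2)
      (c := fun k => ‖(R ^ k) h - S' ((R ^ k) h)‖ ^ 2)
      (fun k => by
        simpa only [hsucc] using
          norm_sq_add_norm_sq_add_norm_sq_le hT hFM inf_le_left hP hR hQ hS' (hmem k)) n
    simp only [pow_zero, one_apply_eq_self, hS'h, sub_zero] at htel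
    linarith [sq_nonneg ‖(R ^ n) h - S' ((R ^ n) h)‖]
  refine ⟨fun m => ?_,
    summable_and_tsum_add_le (fun _ => by positivity) (fun _ => by positivity) hbound⟩
  have hS'sum : ∑ k ∈ Finset.Icc 1 m, ‖S' ((R ^ k) h)‖ ^ 2
      ≤ ∑ k ∈ Finset.range (m + 1), ‖S' ((R ^ (k + 1)) h)‖ ^ 2 := by
    rw [← Finset.Ico_add_one_right_eq_Icc, Finset.sum_Ico_eq_sum_range, add_tsub_cancel_right]
    simp only [add_comm 1]
    exact Finset.sum_le_sum_of_subset_of_nonneg (Finset.range_mono m.le_succ)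
      fun _ _ _ => by positivity
  linarith [hbound (m + 1), Finset.sum_add_distrib (s := Finset.range (m + 1))
    (f := fun k => ‖Q ((R ^ k) h)‖ ^ 2) (g := fun k => ‖S' ((R ^ (k + 1)) h)‖ ^ 2)]

/-- the approximation inequality
`Σ_{k=0}^{m} ‖Q R^k h‖² + Σ_{k=1}^{m} ‖S' R^k h‖² ≤ ‖h‖²` for `h ∈ M`, together with the
convergence of the corresponding infinite series and the bound on its sum. -/
theorem stmt_10 {H : Type*} [NormedAddCommGroup H] [InnerProductSpace ℂ H] [CompleteSpace H]
    (T : H →L[ℂ] H) (hT : ∀ h : H, ‖h‖ ≤ ‖T h‖)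
    (M F : Submodule ℂ H) (hMclosed : IsClosed (M : Set H))
    (p : ℕ) (hFdim : Module.finrank ℂ F = p) (hFM : F ≤ Mᗮ)
    (hnear : ∀ f : H, T f ∈ M → f ∈ M ⊔ F)
    (P : H →L[ℂ] H) (hP : IsOrthoProjOn (M ⊓ LinearMap.range (T : H →ₗ[ℂ] H)) P)
    (R : H →L[ℂ] H) (hR : T.comp R = P)
    (Q : H →L[ℂ] H) (hQ : IsOrthoProjOn (M ⊓ (M ⊓ LinearMap.range (T : H →ₗ[ℂ] H))ᗮ) Q)
    (S' : H →L[ℂ] H) (hS' : IsOrthoProjOn F S') :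
    ∀ h ∈ M,
      (∀ m : ℕ,
        (∑ k ∈ Finset.range (m + 1), ‖Q ((R ^ k) h)‖ ^ 2)
          + ∑ k ∈ Finset.Icc 1 m, ‖S' ((R ^ k) h)‖ ^ 2 ≤ ‖h‖ ^ 2) ∧
      Summable (fun k : ℕ => ‖Q ((R ^ k) h)‖ ^ 2) ∧
      Summable (fun k : ℕ => ‖S' ((R ^ (k + 1)) h)‖ ^ 2) ∧
      (∑' k : ℕ, ‖Q ((R ^ k) h)‖ ^ 2) + (∑' k : ℕ, ‖S' ((R ^ (k + 1)) h)‖ ^ 2)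
        ≤ ‖h‖ ^ 2 :=
  stmt_10_general T hT M F hFM hnear P hP R hR Q hQ S' hS'
end

section
/- Let α ∈ [0,1] be a real number, let K be a nonzero finite-dimensional complex Hilbert space, let W_α be the Hilbert space of sequences f : ℕ → K with ‖f‖²_α := Σₙ (n+1)^α ‖f(n)‖²_K < ∞, and let T be the forward shift on W_α, (T f)(0) = 0 and (T f)(n+1) = f(n). Let M be a closed subspace of W_α that is nearly T⁻¹-invariant with defect p, with defect space F orthogonal to M, and assume M is not contained in T(W_α). Let (e_j)_{j=1}^{p} be an orthonormal basis of F and (f_i)_{i=1}^{r} an orthonormal basis of M ⊖ (M ∩ T(W_α)). Then there exists a linear subspace N of ℓ²(ℕ, ℂʳ × ℂᵖ), invariant under the backward shift (c,d) ↦ ((c,d) composed with n ↦ n+1), such that: (1) M equals the set of all f ∈ W_α for which there exists (c,d) ∈ N with f(n) = Σ_{i=1}^{r} Σ_{k=0}^{n} c(k)_i · f_i(n−k) + Σ_{j=1}^{p} Σ_{k=0}^{n−1} d(k)_j · e_j(n−1−k) for all n ∈ ℕ; and (2) for every f ∈ M the pair (c,d) ∈ N can be chosen so that Σ_{k∈ℕ}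 (‖c(k)‖² + ‖d(k)‖²) ≤ ‖f‖²_α. -/
/-!
Write `U = M ⊓ T(W)`. For `x ∈ M` the component of `x` orthogonal to `U` lies in
`M ⊖ U = span f`, so `x = ∑ ⟪fᵢ, x⟫ fᵢ + T g` with `T g` the projection of `x` onto `U`.
Near invariance puts `g` in `M ⊕ F`, i.e. `g = S x + ∑ dⱼ eⱼ` with `S x ∈ M`, and since `T` is
bounded below, `‖c x‖² + ‖d x‖² + ‖S x‖² ≤ ‖x‖²`. Repeating the step along the orbit `Sᵏ x` and
reading coordinates through the shift gives the convolution formula, while the one-step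
inequality telescopes to the `ℓ²` bound. `N` is the image of `M` under
`x ↦ (c (Sᵏ x), d (Sᵏ x))ₖ`; it is backward shift invariant because the shift of this
sequence is the sequence of `S x`.
-/

open Submodule Set

section BoundedBelow

variable {𝕜 E F : Type*} [NontriviallyNormedField 𝕜] [NormedAddCommGroup E] [NormedSpace 𝕜 E]
  [NormedAddCommGroup F] [NormedSpace 𝕜 F] {T : E →L[𝕜] F}

theorem antilipschitzWith_one_of_norm_le (hT : ∀ x, ‖x‖ ≤ ‖T x‖) : AntilipschitzWith 1 T :=
  T.antilipschitz_of_bound fun x => by simpa using hT x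

theorem isClosed_range_of_norm_le [CompleteSpace E] (hT : ∀ x, ‖x‖ ≤ ‖T x‖) :
    IsClosed (LinearMap.range (T : E →ₗ[𝕜] F) : Set F) := by
  rw [LinearMap.coe_range]
  exact (antilipschitzWith_one_of_norm_le hT).isClosed_range T.uniformContinuous

end BoundedBelow

section Hilbert

variable {𝕜 H : Type*} [RCLike 𝕜] [NormedAddCommGroup H] [InnerProductSpace 𝕜 H]

local notation "⟪" x ", " y "⟫" => inner 𝕜 x y

section InnerCoeffs

variable {ι : Type*}

variable (𝕜) in
noncomputable def innerCoeffs (v : ι → H) : H →ₗ[𝕜] EuclideanSpace 𝕜 ι :=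
  (WithLp.linearEquiv 2 𝕜 (ι → 𝕜)).symm.toLinearMap ∘ₗ LinearMap.pi fun i => innerₛₗ 𝕜 (v i)

@[simp]
theorem innerCoeffs_apply (v : ι → H) (x : H) (i : ι) : innerCoeffs 𝕜 v x i = ⟪v i, x⟫ := rfl

variable [Fintype ι] {v : ι → H}

theorem Orthonormal.norm_sum_smul_sq (hv : Orthonormal 𝕜 v) (l : ι → 𝕜) :
    ‖∑ i, l i • v i‖ ^ 2 = ∑ i, ‖l i‖ ^ 2 := by
  rw [@norm_sq_eq_re_inner 𝕜, hv.inner_sum]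
  simp [RCLike.conj_mul]

theorem Orthonormal.norm_sq_eq_norm_sq_innerCoeffs_add (hv : Orthonormal 𝕜 v) (x : H) :
    ‖x‖ ^ 2 = ‖innerCoeffs 𝕜 v x‖ ^ 2 + ‖x - ∑ i, ⟪v i, x⟫ • v i‖ ^ 2 := by
  set y := ∑ i, ⟪v i, x⟫ • v i
  have horth : ⟪y, x - y⟫ = 0 := by
    simp only [y, sum_inner, inner_smul_left, inner_sub_right, hv.inner_right_fintype, sub_self]
  have hpyth := norm_add_sq_eq_norm_sq_add_norm_sq_of_inner_eq_zero _ _ horth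
  rw [add_sub_cancel, ← sq, ← sq, ← sq] at hpyth
  rw [hpyth, hv.norm_sum_smul_sq, EuclideanSpace.norm_sq_eq]
  rfl

theorem Orthonormal.sub_sum_inner_smul_eq (hv : Orthonormal 𝕜 v) {z w : H}
    (hz : z - w ∈ span 𝕜 (range v)) (hw : w ∈ (span 𝕜 (range v))ᗮ) :
    z - ∑ i, ⟪v i, z⟫ • v i = w := by
  obtain ⟨l, hl⟩ := (mem_span_range_iff_exists_fun 𝕜).mp hz
  have hcoeff (i : ι) : ⟪v i, z⟫ = l i := by
    rw [← hv.inner_right_fintype l i, hl, inner_sub_right,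
      inner_right_of_mem_orthogonal (subset_span (mem_range_self i)) hw, sub_zero]
  simp only [hcoeff, hl, sub_sub_cancel]

end InnerCoeffs

section Preimage

variable {E : Type*} [AddCommGroup E] [Module 𝕜 E]

noncomputable def preimageStarProjection (T : E →ₗ[𝕜] H) (hT : Function.Injective T)
    (U : Submodule 𝕜 H) [U.HasOrthogonalProjection] (hU : U ≤ LinearMap.range T) : H →ₗ[𝕜] E :=
  (LinearEquiv.ofInjective T hT).symm.toLinearMap ∘ₗ Submodule.inclusion hU ∘ₗ
    (U.orthogonalProjectionOnto : H →ₗ[𝕜] U)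

theorem apply_preimageStarProjection (T : E →ₗ[𝕜] H) (hT : Function.Injective T)
    (U : Submodule 𝕜 H) [U.HasOrthogonalProjection] (hU : U ≤ LinearMap.range T) (x : H) :
    T (preimageStarProjection T hT U hU x) = U.starProjection x := by
  have h := LinearEquiv.ofInjective_apply T (h := hT)
    ((LinearEquiv.ofInjective T hT).symm (Submodule.inclusion hU (U.orthogonalProjectionOnto x)))
  rw [LinearEquiv.apply_symm_apply] at h
  exact h.symm

end Preimage

theorem exists_step_of_nearlyInvariant [CompleteSpace H] {ι κ : Type*} [Fintype ι] [Fintype κ]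
    {T : H →L[𝕜] H} (hT : ∀ x, ‖x‖ ≤ ‖T x‖) {M F : Submodule 𝕜 H}
    (hM : IsClosed (M : Set H)) (hFM : F ≤ Mᗮ) (hnear : ∀ x, T x ∈ M → x ∈ M ⊔ F)
    {fb : ι → H} (hfb : Orthonormal 𝕜 fb)
    (hfb_span : span 𝕜 (range fb) = M ⊓ (M ⊓ LinearMap.range (T : H →ₗ[𝕜] H))ᗮ)
    {e : κ → H} (he : Orthonormal 𝕜 e) (he_span : span 𝕜 (range e) = F) :
    ∃ S : H →ₗ[𝕜] H, ∃ d : H →ₗ[𝕜] EuclideanSpace 𝕜 κ, MapsTo S M M ∧ ∀ x ∈ M,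
      x = ∑ i, innerCoeffs 𝕜 fb x i • fb i + T (S x + ∑ j, d x j • e j) ∧
      ‖innerCoeffs 𝕜 fb x‖ ^ 2 + ‖d x‖ ^ 2 + ‖S x‖ ^ 2 ≤ ‖x‖ ^ 2 := by
  set U := M ⊓ LinearMap.range (T : H →ₗ[𝕜] H)
  have : CompleteSpace M := hM.completeSpace_coe
  have : CompleteSpace U := (hM.inter (isClosed_range_of_norm_le hT)).completeSpace_coe
  set g := preimageStarProjection (T : H →ₗ[𝕜] H) (antilipschitzWith_one_of_norm_le hT).injective
    U inf_le_right
  have hTg (x : H) : T (g x) = U.starProjection x := apply_preimageStarProjection _ _ _ _ x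
  refine ⟨M.starProjection.toLinearMap ∘ₗ g, innerCoeffs 𝕜 e ∘ₗ g,
    fun x _ => M.starProjection_apply_mem _, fun x hx => ?_⟩
  have hfb_split : x - ∑ i, ⟪fb i, x⟫ • fb i = U.starProjection x := by
    refine hfb.sub_sum_inner_smul_eq ?_ ?_ <;> rw [hfb_span]
    · exact ⟨M.sub_mem hx (U.starProjection_apply_mem x).1, U.sub_starProjection_mem_orthogonal x⟩
    · exact orthogonal_le inf_le_right (U.le_orthogonal_orthogonal (U.starProjection_apply_mem x))
  have hg_split : g x - ∑ j, ⟪e j, g x⟫ • e j = M.starProjection (g x) := by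
    obtain ⟨m, hm, q, hq, hmq⟩ :=
      mem_sup.mp (hnear (g x) (hTg x ▸ (U.starProjection_apply_mem x).1))
    have hPg : M.starProjection (g x) = m :=
      eq_starProjection_of_mem_orthogonal' hm (hFM hq) hmq.symm
    refine he.sub_sum_inner_smul_eq ?_ ?_ <;> rw [he_span]
    · rwa [hPg, ← hmq, add_sub_cancel_left]
    · exact orthogonal_le hFM (M.le_orthogonal_orthogonal (M.starProjection_apply_mem _))
  simp only [LinearMap.comp_apply, ContinuousLinearMap.coe_coe]
  constructor
  · simp only [innerCoeffs_apply]
    rw [← hg_split, sub_add_cancel, hTg, ← hfb_split, add_sub_cancel]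
  · have hx_norm := hfb.norm_sq_eq_norm_sq_innerCoeffs_add x
    have hg_norm := he.norm_sq_eq_norm_sq_innerCoeffs_add (g x)
    rw [hfb_split] at hx_norm
    rw [hg_split] at hg_norm
    have hg_le : ‖g x‖ ^ 2 ≤ ‖U.starProjection x‖ ^ 2 := by
      rw [← hTg]
      gcongr
      exact hT _
    linarith

end Hilbert

theorem sum_range_iterate_le {α : Type*} {s : Set α} {S : α → α} (hS : MapsTo S s s)
    {E N : α → ℝ} (hN : ∀ x ∈ s, 0 ≤ N x) (hEN : ∀ x ∈ s, E x + N (S x) ≤ N x) (m : ℕ) {x : α}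
    (hx : x ∈ s) : ∑ k ∈ Finset.range m, E (S^[k] x) ≤ N x := by
  induction m generalizing x with
  | zero => simpa using hN x hx
  | succ m ih =>
    rw [Finset.sum_range_succ']
    simp only [Function.iterate_succ_apply, Function.iterate_zero_apply]
    linarith [ih (hS hx), hEN x hx]

theorem memℓp_two_of_summable_norm_sq {α E F : Type*} [NormedAddCommGroup E]
    [NormedAddCommGroup F] {a : α → E × F}
    (ha : Summable fun k => ‖(a k).1‖ ^ 2 + ‖(a k).2‖ ^ 2) : Memℓp a 2 := by
  refine memℓp_gen (ha.of_nonneg_of_le (fun k => by positivity) fun k => ?_)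
  rw [ENNReal.toReal_ofNat, Real.rpow_two, Prod.norm_def]
  rcases max_cases ‖(a k).1‖ ‖(a k).2‖ with ⟨h, _⟩ | ⟨h, _⟩ <;> rw [h] <;>
    nlinarith [sq_nonneg ‖(a k).1‖, sq_nonneg ‖(a k).2‖]

theorem coord_eq_sum_of_eq_add_shift {R H K : Type*} [Semiring R] [AddCommMonoid H] [Module R H]
    [AddCommMonoid K] [Module R K] (coord : H →ₗ[R] ℕ → K) {T : H → H}
    (hT0 : ∀ f, coord (T f) 0 = 0) (hTn : ∀ f n, coord (T f) (n + 1) = coord f n)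
    {s : Set H} {S u v : H → H} (hS : MapsTo S s s) (hdec : ∀ x ∈ s, x = u x + T (S x + v x))
    (n : ℕ) {x : H} (hx : x ∈ s) :
    coord x n = ∑ k ∈ Finset.range (n + 1), coord (u (S^[k] x)) (n - k)
      + ∑ k ∈ Finset.range n, coord (v (S^[k] x)) (n - 1 - k) := by
  induction n generalizing x with
  | zero =>
    conv_lhs => rw [hdec x hx]
    simp [hT0]
  | succ n ih =>
    have hidx (k : ℕ) : n + 1 - 1 - (k + 1) = n - 1 - k := by omega
    rw [Finset.sum_range_succ',
      Finset.sum_range_succ' (fun k => coord (v (S^[k] x)) (n + 1 - 1 - k))]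
    simp only [hidx]
    simp only [Function.iterate_succ_apply, Function.iterate_zero_apply, Nat.add_sub_add_right,
      Nat.sub_zero, Nat.add_sub_cancel]
    conv_lhs => rw [hdec x hx]
    rw [map_add, Pi.add_apply, hTn, map_add, Pi.add_apply, ih (hS hx)]
    abel

theorem exists_lp_submodule_of_orbit {𝕜 H A B : Type*} [NormedField 𝕜] [NormedAddCommGroup H]
    [Module 𝕜 H] [NormedAddCommGroup A] [NormedSpace 𝕜 A] [NormedAddCommGroup B]
    [NormedSpace 𝕜 B] (S : H →ₗ[𝕜] H) (c : H →ₗ[𝕜] A) (d : H →ₗ[𝕜] B) {M : Submodule 𝕜 H}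
    (hS : MapsTo S M M) (hE : ∀ x ∈ M, ‖c x‖ ^ 2 + ‖d x‖ ^ 2 + ‖S x‖ ^ 2 ≤ ‖x‖ ^ 2) :
    ∃ N : Submodule 𝕜 (lp (fun _ : ℕ => A × B) 2),
      (∀ a ∈ N, ∀ b : lp (fun _ : ℕ => A × B) 2, (∀ n, b n = a (n + 1)) → b ∈ N) ∧
      (∀ a ∈ N, ∃ x ∈ M, ∀ k, a k = (c (S^[k] x), d (S^[k] x))) ∧
      ∀ x ∈ M, ∃ a ∈ N, (∀ k, a k = (c (S^[k] x), d (S^[k] x))) ∧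
        ∑' k, (‖(a k).1‖ ^ 2 + ‖(a k).2‖ ^ 2) ≤ ‖x‖ ^ 2 := by
  let Φ : H →ₗ[𝕜] ℕ → A × B := LinearMap.pi fun k => (c.prod d) ∘ₗ S ^ k
  have hΦ (x : H) (k : ℕ) : Φ x k = (c (S^[k] x), d (S^[k] x)) := by
    simp [Φ, Module.End.pow_apply]
  have hsum (x : H) (hx : x ∈ M) (m : ℕ) :
      ∑ k ∈ Finset.range m, (‖(Φ x k).1‖ ^ 2 + ‖(Φ x k).2‖ ^ 2) ≤ ‖x‖ ^ 2 := by
    simp only [hΦ]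
    exact sum_range_iterate_le (E := fun y => ‖c y‖ ^ 2 + ‖d y‖ ^ 2) (N := fun y => ‖y‖ ^ 2) hS
      (fun _ _ => by positivity) hE m hx
  have hmem (x : H) (hx : x ∈ M) : Memℓp (Φ x) 2 :=
    memℓp_two_of_summable_norm_sq (summable_of_sum_range_le (fun _ => by positivity) (hsum x hx))
  refine ⟨(M.map Φ).comap (LinearMap.pi fun n => lp.evalₗ _ 2 n), ?_, ?_, fun x hx =>
    ⟨⟨Φ x, hmem x hx⟩, ⟨x, hx, rfl⟩, hΦ x,
      Real.tsum_le_of_sum_range_le (fun _ => by positivity) (hsum x hx)⟩⟩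
  · rintro a ⟨x, hx, hxa⟩ b hb
    refine ⟨S x, hS hx, funext fun n => ?_⟩
    have hxa_succ := congrFun hxa (n + 1)
    simp only [hΦ, Function.iterate_succ_apply] at hxa_succ ⊢
    rw [hxa_succ]
    exact (hb n).symm
  · rintro a ⟨x, hx, hxa⟩
    exact ⟨x, hx, fun k => (congrFun hxa k).symm.trans (hΦ x k)⟩

theorem stmt_18_general
    {K : Type*} [NormedAddCommGroup K] [InnerProductSpace ℂ K]
    {Wα : Type*} [NormedAddCommGroup Wα] [InnerProductSpace ℂ Wα] [CompleteSpace Wα]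
    (coord : Wα →ₗ[ℂ] (ℕ → K))
    (hinj : Function.Injective coord)
    (T : Wα →L[ℂ] Wα)
    (hT0 : ∀ f : Wα, coord (T f) 0 = 0)
    (hTn : ∀ (f : Wα) (n : ℕ), coord (T f) (n + 1) = coord f n)
    (hTlow : ∀ f : Wα, ‖f‖ ≤ ‖T f‖)
    (M F : Submodule ℂ Wα) (hMclosed : IsClosed (M : Set Wα))
    (p : ℕ) (hFM : F ≤ Mᗮ)
    (hnear : ∀ f : Wα, T f ∈ M → f ∈ M ⊔ F)
    (e : Fin p → Wα) (he_on : Orthonormal ℂ e)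
    (he_span : Submodule.span ℂ (Set.range e) = F)
    (r : ℕ) (fb : Fin r → Wα) (hfb_on : Orthonormal ℂ fb)
    (hfb_span : Submodule.span ℂ (Set.range fb) = M ⊓ (M ⊓ LinearMap.range (T : Wα →ₗ[ℂ] Wα))ᗮ) :
    ∃ N : Submodule ℂ
      (lp (fun _ : ℕ => EuclideanSpace ℂ (Fin r) × EuclideanSpace ℂ (Fin p)) 2),
      -- N is invariant under the backward shift
      (∀ a ∈ N, ∀ b : lp (fun _ : ℕ =>
          EuclideanSpace ℂ (Fin r) × EuclideanSpace ℂ (Fin p)) 2,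
        (∀ n : ℕ, b n = a (n + 1)) → b ∈ N) ∧
      -- (1) M is exactly the set of elements represented by pairs (c, d) ∈ N
      (∀ f : Wα, f ∈ M ↔ ∃ a ∈ N, ∀ n : ℕ,
        coord f n
          = (∑ i : Fin r, ∑ k ∈ Finset.range (n + 1),
              ((a k).1 i) • coord (fb i) (n - k))
            + ∑ j : Fin p, ∑ k ∈ Finset.range n,
              ((a k).2 j) • coord (e j) (n - 1 - k)) ∧
      -- (2) the representation can be chosen with norm control
      (∀ f ∈ M, ∃ a ∈ N, (∀ n : ℕ,
        coord f n
          = (∑ i : Fin r, ∑ k ∈ Finset.range (n + 1),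
              ((a k).1 i) • coord (fb i) (n - k))
            + ∑ j : Fin p, ∑ k ∈ Finset.range n,
              ((a k).2 j) • coord (e j) (n - 1 - k)) ∧
        (∑' k : ℕ, (‖(a k).1‖ ^ 2 + ‖(a k).2‖ ^ 2)) ≤ ‖f‖ ^ 2) := by
  obtain ⟨S, d, hS, hstep⟩ :=
    exists_step_of_nearlyInvariant hTlow hMclosed hFM hnear hfb_on hfb_span he_on he_span
  set c := innerCoeffs ℂ fb
  have hrep (x : Wα) (hx : x ∈ M) (a : ℕ → EuclideanSpace ℂ (Fin r) × EuclideanSpace ℂ (Fin p))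
      (ha : ∀ k, a k = (c (S^[k] x), d (S^[k] x))) (n : ℕ) : coord x n
        = (∑ i : Fin r, ∑ k ∈ Finset.range (n + 1), ((a k).1 i) • coord (fb i) (n - k))
          + ∑ j : Fin p, ∑ k ∈ Finset.range n, ((a k).2 j) • coord (e j) (n - 1 - k) := by
    rw [coord_eq_sum_of_eq_add_shift coord hT0 hTn hS (fun y hy => (hstep y hy).1) n hx]
    simp only [ha, map_sum, map_smul, Finset.sum_apply, Pi.smul_apply]
    rw [Finset.sum_comm, Finset.sum_comm (s := Finset.range n)]
  obtain ⟨N, hshift, hN, hM⟩ := exists_lp_submodule_of_orbit S c d hS (fun x hx => (hstep x hx).2)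
  refine ⟨N, hshift, fun f => ⟨fun hf => ?_, ?_⟩, fun f hf => ?_⟩
  · obtain ⟨a, ha, hfa, -⟩ := hM f hf
    exact ⟨a, ha, hrep f hf a hfa⟩
  · rintro ⟨a, ha, hfa⟩
    obtain ⟨x, hx, hxa⟩ := hN a ha
    rwa [hinj (funext fun n => (hfa n).trans (hrep x hx a hxa n).symm)]
  · obtain ⟨a, ha, hfa, hbound⟩ := hM f hf
    exact ⟨a, ha, hrep f hf a hfa, hbound⟩

/-- description of nearly `T⁻¹`-invariant subspaces with defect `p` of the
weighted sequence space `W_α` (the coefficient model of the Dirichlet-type space `D_α`,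
`α ∈ [0,1]`), case `M ⊄ T(W_α)`: there is a backward-shift invariant linear subspace `N` of
`ℓ²(ℕ, ℂʳ × ℂᵖ)` parametrizing `M`, with norm control. -/
theorem stmt_18 (α : ℝ) (hα₀ : 0 ≤ α) (hα₁ : α ≤ 1)
    {K : Type*} [NormedAddCommGroup K] [InnerProductSpace ℂ K]
    [FiniteDimensional ℂ K] [Nontrivial K]
    {Wα : Type*} [NormedAddCommGroup Wα] [InnerProductSpace ℂ Wα] [CompleteSpace Wα]
    (coord : Wα →ₗ[ℂ] (ℕ → K))
    (hinj : Function.Injective coord)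
    (hsum : ∀ f : Wα, Summable fun n : ℕ => ((n : ℝ) + 1) ^ α * ‖coord f n‖ ^ 2)
    (hnorm : ∀ f : Wα, ‖f‖ ^ 2 = ∑' n : ℕ, ((n : ℝ) + 1) ^ α * ‖coord f n‖ ^ 2)
    (hsurj : ∀ g : ℕ → K, Summable (fun n : ℕ => ((n : ℝ) + 1) ^ α * ‖g n‖ ^ 2) →
      ∃ f : Wα, coord f = g)
    (T : Wα →L[ℂ] Wα)
    (hT0 : ∀ f : Wα, coord (T f) 0 = 0)
    (hTn : ∀ (f : Wα) (n : ℕ), coord (T f) (n + 1) = coord f n)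
    (hTlow : ∀ f : Wα, ‖f‖ ≤ ‖T f‖)
    (M F : Submodule ℂ Wα) (hMclosed : IsClosed (M : Set Wα))
    (p : ℕ) (hFdim : Module.finrank ℂ F = p) (hFM : F ≤ Mᗮ)
    (hnear : ∀ f : Wα, T f ∈ M → f ∈ M ⊔ F)
    (hMnot : ¬ M ≤ LinearMap.range (T : Wα →ₗ[ℂ] Wα))
    (e : Fin p → Wα) (he_on : Orthonormal ℂ e)
    (he_mem : ∀ j, e j ∈ F) (he_span : Submodule.span ℂ (Set.range e) = F)
    (r : ℕ) (fb : Fin r → Wα) (hfb_on : Orthonormal ℂ fb)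
    (hfb_mem : ∀ i, fb i ∈ M ⊓ (M ⊓ LinearMap.range (T : Wα →ₗ[ℂ] Wα))ᗮ)
    (hfb_span : Submodule.span ℂ (Set.range fb) = M ⊓ (M ⊓ LinearMap.range (T : Wα →ₗ[ℂ] Wα))ᗮ) :
    ∃ N : Submodule ℂ
      (lp (fun _ : ℕ => EuclideanSpace ℂ (Fin r) × EuclideanSpace ℂ (Fin p)) 2),
      -- N is invariant under the backward shift
      (∀ a ∈ N, ∀ b : lp (fun _ : ℕ =>
          EuclideanSpace ℂ (Fin r) × EuclideanSpace ℂ (Fin p)) 2,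
        (∀ n : ℕ, b n = a (n + 1)) → b ∈ N) ∧
      -- (1) M is exactly the set of elements represented by pairs (c, d) ∈ N
      (∀ f : Wα, f ∈ M ↔ ∃ a ∈ N, ∀ n : ℕ,
        coord f n
          = (∑ i : Fin r, ∑ k ∈ Finset.range (n + 1),
              ((a k).1 i) • coord (fb i) (n - k))
            + ∑ j : Fin p, ∑ k ∈ Finset.range n,
              ((a k).2 j) • coord (e j) (n - 1 - k)) ∧
      -- (2) the representation can be chosen with norm control
      (∀ f ∈ M, ∃ a ∈ N, (∀ n : ℕ,
        coord f n
          = (∑ i : Fin r, ∑ k ∈ Finset.range (n + 1),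
              ((a k).1 i) • coord (fb i) (n - k))
            + ∑ j : Fin p, ∑ k ∈ Finset.range n,
              ((a k).2 j) • coord (e j) (n - 1 - k)) ∧
        (∑' k : ℕ, (‖(a k).1‖ ^ 2 + ‖(a k).2‖ ^ 2)) ≤ ‖f‖ ^ 2) :=
  stmt_18_general coord hinj T hT0 hTn hTlow M F hMclosed p hFM hnear e he_on he_span r fb hfb_on
    hfb_span
end
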